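/- Let a < b be real numbers and let g : ℝ → ℝ be completely monotone on the open interval (a, b). Then g extends analytically to the complex plane: there exists a function G : ℂ → ℂ that is analytic on the open disc {z ∈ ℂ : |z - b| < b - a} and satisfies G(x) = g(x) for all real x ∈ (a, b). -/

import Mathlib

open Set Real

def CompletelyMonotoneOn (f : ℝ → ℝ) (I : Set ℝ) : Prop :=
  ContDiffOn ℝ (⊤ : ℕ∞) f I ∧
    ∀ (n : ℕ), ∀ x ∈ I, 0 ≤ (-1 : ℝ) ^ n * iteratedDerivWithin n f I x

open Filter Topology Nat

set_option linter.unusedSectionVars false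

lemma myCDiter {f : ℝ → ℝ} {U : Set ℝ} (hU : IsOpen U)
    (hf : ContDiffOn ℝ (⊤ : ℕ∞) f U) :
    ∀ n : ℕ, ContDiffOn ℝ (⊤ : ℕ∞) (iteratedDeriv n f) U := by
  intro n
  induction n with
  | zero => simpa [iteratedDeriv_zero] using hf
  | succ n ih =>
    rw [iteratedDeriv_succ]
    exact ih.deriv_of_isOpen hU (by exact_mod_cast le_top)

lemma myWithinEq {f : ℝ → ℝ} {U s : Set ℝ} (hU : IsOpen U)
    (hf : ContDiffOn ℝ (⊤ : ℕ∞) f U) (hsU : s ⊆ U) (hs : UniqueDiffOn ℝ s) :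
    ∀ n : ℕ, ∀ y ∈ s, iteratedDerivWithin n f s y = iteratedDeriv n f y := by
  intro n
  induction n with
  | zero => intro y hy; simp
  | succ n ih =>
    intro y hy
    rw [iteratedDerivWithin_succ, derivWithin_congr ih (ih y hy),
      DifferentiableAt.derivWithin ?_ (hs y hy), ← iteratedDeriv_succ]
    have := (myCDiter hU hf n).contDiffAt (hU.mem_nhds (hsU hy))
    exact this.differentiableAt (by simp)

lemma myReflect (f : ℝ → ℝ) (c : ℝ) (n : ℕ) (y : ℝ) :
    iteratedDeriv n (fun z => f (c - z)) y = (-1 : ℝ) ^ n * iteratedDeriv n f (c - y) := by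
  have h2 := iteratedDeriv_comp_neg n (fun w => f (c + w)) y
  simp only [← sub_eq_add_neg] at h2
  rw [h2, congrFun (iteratedDeriv_comp_const_add n f c) (-y)]
  simp [sub_eq_add_neg]

lemma myTaylor {a b : ℝ} {g : ℝ → ℝ} (hg1 : ContDiffOn ℝ (⊤ : ℕ∞) g (Ioo a b))
    {x x₀ : ℝ} (hax : a < x) (hxx : x < x₀) (hx₀b : x₀ < b) (n : ℕ) :
    ∃ ξ ∈ Ioo x x₀, g x =
      (∑ k ∈ Finset.range (n + 1),
        (-1 : ℝ) ^ k * iteratedDeriv k g x₀ * (x₀ - x) ^ k / (k ! : ℝ)) +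
      (-1 : ℝ) ^ (n + 1) * iteratedDeriv (n + 1) g ξ * (x₀ - x) ^ (n + 1) / ((n + 1)! : ℝ) := by
  set c : ℝ := x + x₀ with hc
  set f₁ : ℝ → ℝ := fun z => g (c - z) with hf₁
  set V : Set ℝ := Ioo (c - b) (c - a) with hV
  have hVmaps : ∀ y ∈ V, c - y ∈ Ioo a b := by
    intro y hy; rcases hy with ⟨h1, h2⟩; constructor <;> [skip; skip] <;> linarith
  have hf₁CD : ContDiffOn ℝ (⊤ : ℕ∞) f₁ V := by
    apply hg1.comp ((contDiff_const.sub contDiff_id).contDiffOn)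
    intro y hy; exact hVmaps y hy
  have hIccV : Icc x x₀ ⊆ V := by
    intro y hy; rcases hy with ⟨h1, h2⟩
    constructor <;> simp only [hc] <;> linarith
  have hud : UniqueDiffOn ℝ (Icc x x₀) := uniqueDiffOn_Icc hxx
  have hWE := myWithinEq (isOpen_Ioo) hf₁CD hIccV hud
  have hf : ContDiffOn ℝ (n : ℕ∞) f₁ (Icc x x₀) :=
    (hf₁CD.mono hIccV).of_le (by exact_mod_cast le_top)
  have hf' : DifferentiableOn ℝ (iteratedDerivWithin n f₁ (Icc x x₀)) (Ioo x x₀) := by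
    apply DifferentiableOn.mono _ Ioo_subset_Icc_self
    exact (hf₁CD.mono hIccV).differentiableOn_iteratedDerivWithin
      (by exact_mod_cast ENat.coe_lt_top n) hud
  obtain ⟨ξ', hξ', heq⟩ := taylor_mean_remainder_lagrange hxx.ne
    (by rw [uIcc_of_le hxx.le]; exact hf) (by rw [uIcc_of_le hxx.le, uIoo_of_le hxx.le]; exact hf')
  rw [uIoo_of_le hxx.le] at hξ'
  rw [uIcc_of_le hxx.le] at heq
  refine ⟨c - ξ', ?_, ?_⟩
  · rcases hξ' with ⟨h1, h2⟩; constructor <;> simp only [hc] <;> linarith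
  · have hfx₀ : f₁ x₀ = g x := by simp only [hf₁, hc]; ring_nf
    have htay : taylorWithinEval f₁ n (Icc x x₀) x x₀ =
        ∑ k ∈ Finset.range (n + 1),
          (-1 : ℝ) ^ k * iteratedDeriv k g x₀ * (x₀ - x) ^ k / (k ! : ℝ) := by
      rw [taylor_within_apply]
      apply Finset.sum_congr rfl
      intro k hk
      rw [hWE k x (left_mem_Icc.2 hxx.le), myReflect g c k x]
      have : c - x = x₀ := by simp only [hc]; ring
      rw [this]; simp [smul_eq_mul]; ring
    have hrem : iteratedDerivWithin (n + 1) f₁ (Icc x x₀) ξ' =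
        (-1 : ℝ) ^ (n + 1) * iteratedDeriv (n + 1) g (c - ξ') := by
      rw [hWE (n + 1) ξ' (Ioo_subset_Icc_self hξ'), myReflect]
    rw [hfx₀, htay, hrem] at heq
    have := heq
    linarith [this, sub_eq_iff_eq_add.mp this]

/-- the signed derivative -/
noncomputable def SD (g : ℝ → ℝ) (n : ℕ) (x : ℝ) : ℝ := (-1 : ℝ) ^ n * iteratedDeriv n g x

section facts
variable {a b : ℝ} {g : ℝ → ℝ} (hab : a < b)
  (hg1 : ContDiffOn ℝ (⊤ : ℕ∞) g (Ioo a b))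
  (hsg : ∀ n : ℕ, ∀ x ∈ Ioo a b, 0 ≤ SD g n x)

include hab hg1 hsg

lemma SD_anti (n : ℕ) : AntitoneOn (SD g n) (Ioo a b) := by
  have hCD := myCDiter isOpen_Ioo hg1
  have hdiff : ∀ x ∈ Ioo a b, DifferentiableAt ℝ (iteratedDeriv n g) x := fun x hx =>
    ((hCD n).contDiffAt (isOpen_Ioo.mem_nhds hx)).differentiableAt (by simp)
  apply antitoneOn_of_deriv_nonpos (convex_Ioo a b)
  · exact continuousOn_const.mul (hCD n).continuousOn
  · rw [interior_Ioo]
    exact fun x hx => ((hdiff x hx).const_mul _).differentiableWithinAt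
  · rw [interior_Ioo]
    intro x hx
    have hSDeq : SD g n = fun y => (-1 : ℝ) ^ n * iteratedDeriv n g y := rfl
    rw [hSDeq, deriv_const_mul _ (hdiff x hx)]
    have h1 : deriv (iteratedDeriv n g) x = iteratedDeriv (n + 1) g x := by
      rw [← iteratedDeriv_succ]
    rw [h1]
    have h2 := hsg (n + 1) x hx
    unfold SD at h2
    rw [pow_succ] at h2
    nlinarith [h2]

lemma partial_le {x x₀ : ℝ} (hax : a < x) (hxx : x < x₀) (hx₀b : x₀ < b) (m : ℕ) :
    ∑ k ∈ Finset.range m, SD g k x₀ * (x₀ - x) ^ k / (k ! : ℝ) ≤ g x := by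
  cases m with
  | zero =>
    have := hsg 0 x ⟨hax, hxx.trans hx₀b⟩
    simp only [SD, pow_zero, one_mul, iteratedDeriv_zero] at this
    simpa using this
  | succ n =>
    obtain ⟨ξ, hξ, heq⟩ := myTaylor hg1 hax hxx hx₀b n
    have hξab : ξ ∈ Ioo a b := ⟨by linarith [hξ.1], by linarith [hξ.2]⟩
    have h1 : 0 ≤ SD g (n + 1) ξ := hsg (n + 1) ξ hξab
    have hrem : 0 ≤ (-1 : ℝ) ^ (n + 1) * iteratedDeriv (n + 1) g ξ * (x₀ - x) ^ (n + 1)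
        / ((n + 1)! : ℝ) := by
      apply div_nonneg _ (by positivity)
      exact mul_nonneg h1 (pow_nonneg (by linarith) _)
    simp only [SD]
    linarith [heq, hrem]

lemma term_le {x x₀ : ℝ} (hax : a < x) (hxx : x < x₀) (hx₀b : x₀ < b) (k : ℕ) :
    SD g k x₀ * (x₀ - x) ^ k / (k ! : ℝ) ≤ g x := by
  refine le_trans ?_ (partial_le hab hg1 hsg hax hxx hx₀b (k + 1))
  apply Finset.single_le_sum (f := fun i => SD g i x₀ * (x₀ - x) ^ i / (i ! : ℝ))
    (fun i _ => ?_) (Finset.self_mem_range_succ k)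
  apply div_nonneg _ (by positivity)
  exact mul_nonneg (hsg i x₀ ⟨hax.trans hxx, hx₀b⟩) (pow_nonneg (by linarith) _)

lemma MM_nonneg (k : ℕ) : 0 ≤ sInf (SD g k '' Ioo a b) := by
  apply Real.sInf_nonneg
  rintro y ⟨x, hx, rfl⟩
  exact hsg k x hx

lemma MM_le (k : ℕ) {x : ℝ} (hx : x ∈ Ioo a b) : sInf (SD g k '' Ioo a b) ≤ SD g k x :=
  csInf_le ⟨0, by rintro y ⟨z, hz, rfl⟩; exact hsg k z hz⟩ (mem_image_of_mem _ hx)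

lemma MM_tendsto (k : ℕ) :
    Tendsto (SD g k) (𝓝[<] b) (𝓝 (sInf (SD g k '' Ioo a b))) :=
  AntitoneOn.tendsto_nhdsWithin_Ioo_left (nonempty_Ioo.2 hab)
    (SD_anti hab hg1 hsg k) ⟨0, by rintro y ⟨z, hz, rfl⟩; exact hsg k z hz⟩

lemma MM_bound (k : ℕ) {x : ℝ} (hx : x ∈ Ioo a b) :
    sInf (SD g k '' Ioo a b) * (b - x) ^ k / (k ! : ℝ) ≤ g x := by
  have hM0 := MM_nonneg hab hg1 hsg k
  have hev : ∀ᶠ x₀ in 𝓝[<] b,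
      sInf (SD g k '' Ioo a b) * (x₀ - x) ^ k / (k ! : ℝ) ≤ g x := by
    filter_upwards [Ioo_mem_nhdsLT hx.2] with x₀ hx₀
    refine le_trans ?_ (term_le hab hg1 hsg hx.1 hx₀.1 hx₀.2 k)
    have h1 : (0:ℝ) ≤ (x₀ - x) ^ k := pow_nonneg (by linarith [hx₀.1]) _
    gcongr
    exact MM_le hab hg1 hsg k ⟨hx.1.trans hx₀.1, hx₀.2⟩
  have htd : Tendsto (fun x₀ : ℝ => sInf (SD g k '' Ioo a b) * (x₀ - x) ^ k / (k ! : ℝ))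
      (𝓝[<] b) (𝓝 (sInf (SD g k '' Ioo a b) * (b - x) ^ k / (k ! : ℝ))) := by
    apply Tendsto.div_const
    apply Tendsto.const_mul
    exact (((continuous_id.sub continuous_const).pow k).tendsto b).mono_left nhdsWithin_le_nhds
  exact le_of_tendsto htd hev

lemma MM_summable {x : ℝ} (hx : x ∈ Ioo a b) :
    Summable (fun k => sInf (SD g k '' Ioo a b) * (b - x) ^ k / (k ! : ℝ)) := by
  set x' : ℝ := (a + x) / 2 with hx'
  have hx'ab : x' ∈ Ioo a b := ⟨by simp only [hx']; linarith [hx.1], by simp only [hx']; linarith [hx.1, hx.2]⟩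
  have hxx' : x' < x := by simp only [hx']; linarith [hx.1]
  set q : ℝ := (b - x) / (b - x') with hq
  have hq0 : 0 ≤ q := by
    apply div_nonneg <;> linarith [hx.2, hx'ab.2]
  have hq1 : q < 1 := by
    rw [hq, div_lt_one (by linarith [hx'ab.2])]
    linarith
  apply Summable.of_nonneg_of_le (fun k => ?_) (fun k => ?_)
    ((summable_geometric_of_lt_one hq0 hq1).mul_left (g x'))
  · apply div_nonneg _ (by positivity)
    exact mul_nonneg (MM_nonneg hab hg1 hsg k) (pow_nonneg (by linarith [hx.2]) _)
  · have heq : sInf (SD g k '' Ioo a b) * (b - x) ^ k / (k ! : ℝ)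
        = (sInf (SD g k '' Ioo a b) * (b - x') ^ k / (k ! : ℝ)) * q ^ k := by
      rw [hq, div_pow]
      have hbx' : (b - x') ^ k ≠ 0 := pow_ne_zero _ (by linarith [hx'ab.2])
      field_simp
    rw [heq]
    exact mul_le_mul_of_nonneg_right (MM_bound hab hg1 hsg k hx'ab) (pow_nonneg hq0 k)

lemma MM_lower {x : ℝ} (hx : x ∈ Ioo a b) :
    ∑' k, sInf (SD g k '' Ioo a b) * (b - x) ^ k / (k ! : ℝ) ≤ g x := by
  apply tsum_le_of_sum_range_le (fun k => ?_) (fun n => ?_)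
  · apply div_nonneg _ (by positivity)
    exact mul_nonneg (MM_nonneg hab hg1 hsg k) (pow_nonneg (by linarith [hx.2]) _)
  · -- limit over x₀ → b of the finite sum inequality
    have hev : ∀ᶠ x₀ in 𝓝[<] b,
        ∑ k ∈ Finset.range n, sInf (SD g k '' Ioo a b) * (x₀ - x) ^ k / (k ! : ℝ) ≤ g x := by
      filter_upwards [Ioo_mem_nhdsLT hx.2] with x₀ hx₀
      refine le_trans ?_ (partial_le hab hg1 hsg hx.1 hx₀.1 hx₀.2 n)
      apply Finset.sum_le_sum
      intro k _
      have h1 : (0:ℝ) ≤ (x₀ - x) ^ k := pow_nonneg (by linarith [hx₀.1]) _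
      gcongr
      exact MM_le hab hg1 hsg k ⟨hx.1.trans hx₀.1, hx₀.2⟩
    have htd : Tendsto (fun x₀ : ℝ => ∑ k ∈ Finset.range n,
        sInf (SD g k '' Ioo a b) * (x₀ - x) ^ k / (k ! : ℝ)) (𝓝[<] b)
        (𝓝 (∑ k ∈ Finset.range n, sInf (SD g k '' Ioo a b) * (b - x) ^ k / (k ! : ℝ))) := by
      apply tendsto_finset_sum
      intro k _
      apply Tendsto.div_const
      apply Tendsto.const_mul
      exact (((continuous_id.sub continuous_const).pow k).tendsto b).mono_left nhdsWithin_le_nhds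
    exact le_of_tendsto htd hev


lemma MM_upper {x : ℝ} (hx : x ∈ Ioo ((a + b) / 2) b) :
    g x ≤ ∑' k, sInf (SD g k '' Ioo a b) * (b - x) ^ k / (k ! : ℝ) := by
  have hxab : x ∈ Ioo a b := ⟨by linarith [hx.1], hx.2⟩
  set x'' : ℝ := (a + (2 * x - b)) / 2 with hx''
  have hax'' : a < x'' := by simp only [hx'']; linarith [hx.1]
  have hx''2xb : x'' < 2 * x - b := by simp only [hx'']; linarith [hx.1]
  have hx''x : x'' < x := by linarith [hx.2]
  have hx''ab : x'' ∈ Ioo a b := ⟨hax'', by linarith [hxab.2]⟩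
  have hgx''0 : 0 ≤ g x'' := by
    have := hsg 0 x'' hx''ab
    simp only [SD, pow_zero, one_mul, iteratedDeriv_zero] at this
    exact this
  -- fraction bound, used repeatedly
  have hfrac : ∀ x₀ ∈ Ioo x b, ∀ k : ℕ,
      SD g k x₀ * (x₀ - x) ^ k / (k ! : ℝ) ≤ g x'' * ((x₀ - x) / (x₀ - x'')) ^ k := by
    intro x₀ hx₀ k
    have hxx₀ : x < x₀ := hx₀.1
    have heq : SD g k x₀ * (x₀ - x) ^ k / (k ! : ℝ)
        = (SD g k x₀ * (x₀ - x'') ^ k / (k ! : ℝ)) * ((x₀ - x) / (x₀ - x'')) ^ k := by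
      rw [div_pow]
      have h2 : (x₀ - x'') ^ k ≠ 0 := pow_ne_zero _ (by linarith)
      field_simp
    rw [heq]
    apply mul_le_mul_of_nonneg_right (term_le hab hg1 hsg hax'' (by linarith) hx₀.2 k)
    apply pow_nonneg (div_nonneg (by linarith) (by linarith))
  -- step 1: for each center x₀, g x is at most the full Taylor sum at x₀
  have claim1 : ∀ x₀ ∈ Ioo x b, g x ≤ ∑' k, SD g k x₀ * (x₀ - x) ^ k / (k ! : ℝ) := by
    intro x₀ hx₀
    have hxx₀ : x < x₀ := hx₀.1
    have hx₀b : x₀ < b := hx₀.2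
    set q₀ : ℝ := (x₀ - x) / (x₀ - x'') with hq₀
    have hq₀0 : 0 ≤ q₀ := div_nonneg (by linarith) (by linarith)
    have hq₀1 : q₀ < 1 := by
      rw [hq₀, div_lt_one (by linarith)]; linarith
    have hterm0 : ∀ k : ℕ, 0 ≤ SD g k x₀ * (x₀ - x) ^ k / (k ! : ℝ) := fun k => by
      apply div_nonneg _ (by positivity)
      exact mul_nonneg (hsg k x₀ ⟨by linarith [hxab.1], hx₀b⟩) (pow_nonneg (by linarith) _)
    have hsum : Summable (fun k => SD g k x₀ * (x₀ - x) ^ k / (k ! : ℝ)) := by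
      apply Summable.of_nonneg_of_le hterm0 (fun k => hfrac x₀ hx₀ k)
        ((summable_geometric_of_lt_one hq₀0 hq₀1).mul_left (g x''))
    set q₁ : ℝ := (x₀ - x) / (x - x'') with hq₁
    have hq₁0 : 0 ≤ q₁ := div_nonneg (by linarith) (by linarith)
    have hq₁1 : q₁ < 1 := by
      rw [hq₁, div_lt_one (by linarith)]; linarith
    have hstep : ∀ n : ℕ, g x ≤ (∑' k, SD g k x₀ * (x₀ - x) ^ k / (k ! : ℝ))
        + g x'' * q₁ ^ (n + 1) := by
      intro n
      obtain ⟨ξ, hξ, heq⟩ := myTaylor hg1 hxab.1 hxx₀ hx₀b n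
      have hξab : ξ ∈ Ioo a b := ⟨by linarith [hξ.1, hxab.1], by linarith [hξ.2]⟩
      have hrem1 : (-1:ℝ) ^ (n+1) * iteratedDeriv (n+1) g ξ * (x₀ - x) ^ (n+1) / ((n+1)! : ℝ)
          ≤ SD g (n+1) x * (x₀ - x) ^ (n+1) / ((n+1)! : ℝ) := by
        have hmono : SD g (n+1) ξ ≤ SD g (n+1) x :=
          SD_anti hab hg1 hsg (n+1) hxab hξab (le_of_lt hξ.1)
        have h2 : (0:ℝ) ≤ (x₀ - x) ^ (n+1) := pow_nonneg (by linarith) _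
        exact (div_le_div_iff_of_pos_right (c := ((n+1)! : ℝ)) (by positivity)).mpr
          (mul_le_mul_of_nonneg_right hmono h2)
      have hrem2 : SD g (n+1) x * (x₀ - x) ^ (n+1) / ((n+1)! : ℝ) ≤ g x'' * q₁ ^ (n+1) := by
        have heq2 : SD g (n+1) x * (x₀ - x) ^ (n+1) / ((n+1)! : ℝ)
            = (SD g (n+1) x * (x - x'') ^ (n+1) / ((n+1)! : ℝ)) * q₁ ^ (n+1) := by
          rw [hq₁, div_pow]
          have h2 : (x - x'') ^ (n+1) ≠ 0 := pow_ne_zero _ (by linarith)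
          field_simp
        rw [heq2]
        apply mul_le_mul_of_nonneg_right
          (term_le hab hg1 hsg hax'' hx''x hxab.2 (n+1)) (pow_nonneg hq₁0 _)
      have hpart : ∑ k ∈ Finset.range (n+1), SD g k x₀ * (x₀ - x) ^ k / (k ! : ℝ)
          ≤ ∑' k, SD g k x₀ * (x₀ - x) ^ k / (k ! : ℝ) :=
        hsum.sum_le_tsum (Finset.range (n+1)) (fun k _ => hterm0 k)
      have : g x ≤ (∑ k ∈ Finset.range (n+1), SD g k x₀ * (x₀ - x) ^ k / (k ! : ℝ))
          + SD g (n+1) x * (x₀ - x) ^ (n+1) / ((n+1)! : ℝ) := by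
        simp only [SD]
        simp only [SD] at hrem1
        linarith [heq, hrem1]
      linarith [hrem2, hpart]
    have htd : Tendsto (fun n : ℕ => (∑' k, SD g k x₀ * (x₀ - x) ^ k / (k ! : ℝ))
        + g x'' * q₁ ^ (n + 1)) atTop (𝓝 ((∑' k, SD g k x₀ * (x₀ - x) ^ k / (k ! : ℝ)) + 0)) := by
      apply Tendsto.const_add
      have h0 : Tendsto (fun n : ℕ => q₁ ^ (n+1)) atTop (𝓝 0) :=
        (tendsto_pow_atTop_nhds_zero_of_lt_one hq₁0 hq₁1).comp (tendsto_add_atTop_nat 1)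
      simpa using h0.const_mul (g x'')
    rw [add_zero] at htd
    exact ge_of_tendsto htd (Eventually.of_forall hstep)
  -- step 2: dominated convergence as x₀ → b
  set q₂ : ℝ := (b - x) / (b - x'') with hq₂
  have hq₂0 : 0 ≤ q₂ := div_nonneg (by linarith [hx.2]) (by linarith [hx''ab.2])
  have hq₂1 : q₂ < 1 := by
    rw [hq₂, div_lt_one (by linarith [hx''ab.2])]; linarith
  have claim2 : Tendsto (fun x₀ => ∑' k, SD g k x₀ * (x₀ - x) ^ k / (k ! : ℝ)) (𝓝[<] b)
      (𝓝 (∑' k, sInf (SD g k '' Ioo a b) * (b - x) ^ k / (k ! : ℝ))) := by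
    apply tendsto_tsum_of_dominated_convergence (bound := fun k => g x'' * q₂ ^ k)
      ((summable_geometric_of_lt_one hq₂0 hq₂1).mul_left (g x''))
    · intro k
      apply Tendsto.div_const
      apply Tendsto.mul (MM_tendsto hab hg1 hsg k)
      exact (((continuous_id.sub continuous_const).pow k).tendsto b).mono_left nhdsWithin_le_nhds
    · filter_upwards [Ioo_mem_nhdsLT hx.2] with x₀ hx₀
      intro k
      have hterm0 : 0 ≤ SD g k x₀ * (x₀ - x) ^ k / (k ! : ℝ) := by
        apply div_nonneg _ (by positivity)
        exact mul_nonneg (hsg k x₀ ⟨by linarith [hxab.1, hx₀.1], hx₀.2⟩)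
          (pow_nonneg (by linarith [hx₀.1]) _)
      rw [Real.norm_eq_abs, abs_of_nonneg hterm0]
      refine (hfrac x₀ hx₀ k).trans ?_
      apply mul_le_mul_of_nonneg_left _ hgx''0
      apply pow_le_pow_left₀ (div_nonneg (by linarith [hx₀.1]) (by linarith [hx₀.1]))
      rw [div_le_div_iff₀ (by linarith [hx₀.1]) (by linarith [hx''ab.2])]
      nlinarith [hx₀.1, hx₀.2, hx''x]
  exact ge_of_tendsto claim2 (Filter.eventually_of_mem (Ioo_mem_nhdsLT hx.2) claim1)


lemma myKey : ∃ G : ℂ → ℂ, AnalyticOnNhd ℂ G (Metric.ball (b : ℂ) (b - a)) ∧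
    ∀ x ∈ Ioo ((a + b) / 2) b, G (x : ℂ) = (g x : ℂ) := by
  classical
  set M : ℕ → ℝ := fun k => sInf (SD g k '' Ioo a b) with hM
  set cs : ℕ → ℂ := fun k => (((-1 : ℝ) ^ k * M k / (k ! : ℝ) : ℝ) : ℂ) with hcs
  set p : FormalMultilinearSeries ℂ ℂ ℂ := FormalMultilinearSeries.ofScalars ℂ cs with hp
  have hnorm : ∀ n : ℕ, ‖p n‖ = M n / (n ! : ℝ) := by
    intro n
    rw [hp, FormalMultilinearSeries.ofScalars_norm, hcs]
    rw [Complex.norm_real, Real.norm_eq_abs, abs_div, abs_mul, abs_pow, abs_neg, abs_one,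
      one_pow, one_mul, abs_of_nonneg (MM_nonneg hab hg1 hsg n), Nat.abs_cast]
  have hrad : ENNReal.ofReal (b - a) ≤ p.radius := by
    apply ENNReal.le_of_forall_nnreal_lt
    intro r hr
    have hrba : (r : ℝ) < b - a := by
      rwa [← ENNReal.ofReal_coe_nnreal, ENNReal.ofReal_lt_ofReal_iff (by linarith)] at hr
    set x : ℝ := b - max (r : ℝ) ((b - a) / 2) with hxdef
    have hmax1 : max (r : ℝ) ((b - a) / 2) < b - a := max_lt hrba (by linarith)
    have hmax0 : (0:ℝ) < max (r : ℝ) ((b - a) / 2) := lt_max_of_lt_right (by linarith)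
    have hxa : a < x := by simp only [hxdef]; linarith
    have hxb : x < b := by simp only [hxdef]; linarith
    have hrx : (r : ℝ) ≤ b - x := by simp only [hxdef]; simp
    apply FormalMultilinearSeries.le_radius_of_bound _ (g x)
    intro n
    rw [hnorm n]
    calc M n / (n ! : ℝ) * (r:ℝ) ^ n ≤ M n / (n ! : ℝ) * (b - x) ^ n := by
          gcongr
          exact div_nonneg (MM_nonneg hab hg1 hsg n) (by positivity)
      _ ≤ g x := by
          rw [div_mul_eq_mul_div]
          exact MM_bound hab hg1 hsg n ⟨hxa, hxb⟩
  set G : ℂ → ℂ := fun z => p.sum (z - (b:ℂ)) with hG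
  have hGb : HasFPowerSeriesOnBall G p (b:ℂ) (ENNReal.ofReal (b - a)) := by
    refine ⟨hrad, ENNReal.ofReal_pos.2 (by linarith), ?_⟩
    intro y hy
    have h1 : G ((b:ℂ) + y) = p.sum y := by rw [hG]; simp
    rw [h1]
    exact p.hasSum (EMetric.ball_subset_ball hrad hy)
  refine ⟨G, ?_, ?_⟩
  · rw [← Metric.emetric_ball]
    exact hGb.analyticOnNhd
  · intro x hx
    have hxab : x ∈ Ioo a b := ⟨by linarith [hx.1], hx.2⟩
    have hsum : Summable (fun k => M k * (b - x) ^ k / (k ! : ℝ)) :=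
      MM_summable hab hg1 hsg hxab
    have heq : ∀ k : ℕ, (p k fun _ => (x:ℂ) - (b:ℂ)) = ((M k * (b - x) ^ k / (k ! : ℝ) : ℝ) : ℂ) := by
      intro k
      rw [hp, FormalMultilinearSeries.ofScalars_apply_eq, hcs]
      have h2 : (x:ℂ) - (b:ℂ) = ((x - b : ℝ) : ℂ) := by push_cast; ring
      rw [smul_eq_mul, h2, ← Complex.ofReal_pow, ← Complex.ofReal_mul]
      congr 1
      have h3 : (b - x) ^ k = (-1:ℝ) ^ k * (x - b) ^ k := by
        rw [show b - x = -(x - b) by ring, neg_pow]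
      rw [h3]; ring
    have hval : G (x:ℂ) = ((∑' k, M k * (b - x) ^ k / (k ! : ℝ) : ℝ) : ℂ) := by
      rw [hG]
      show p.sum ((x:ℂ) - (b:ℂ)) = _
      rw [FormalMultilinearSeries.sum, tsum_congr heq, ← Complex.ofReal_tsum]
    rw [hval]
    congr 1
    exact le_antisymm (MM_lower hab hg1 hsg hxab) (MM_upper hab hg1 hsg hx)

end facts


lemma myMemBall {t c ρ : ℝ} (h : |t - c| < ρ) : (t : ℂ) ∈ Metric.ball (c : ℂ) ρ := by
  rw [Metric.mem_ball, Complex.dist_eq, ← Complex.ofReal_sub, Complex.norm_real, Real.norm_eq_abs]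
  exact h

theorem completely_monotone_extends_analytically (a b : ℝ) (hab : a < b)
    (g : ℝ → ℝ) (hg : CompletelyMonotoneOn g (Set.Ioo a b)) :
    ∃ G : ℂ → ℂ, AnalyticOnNhd ℂ G (Metric.ball (b : ℂ) (b - a)) ∧
      ∀ x ∈ Set.Ioo a b, G (x : ℂ) = (g x : ℂ) := by
  obtain ⟨hg1, hg2⟩ := hg
  have hsg : ∀ n : ℕ, ∀ x ∈ Ioo a b, 0 ≤ SD g n x := by
    intro n x hx
    have h0 := hg2 n x hx
    rwa [myWithinEq isOpen_Ioo hg1 (subset_refl _) isOpen_Ioo.uniqueDiffOn n x hx] at h0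
  obtain ⟨G, hGa, hGeq⟩ := myKey hab hg1 hsg
  refine ⟨G, hGa, ?_⟩
  -- g is real-analytic on (a, b)
  have hganal : ∀ x₀ ∈ Ioo a b, AnalyticAt ℝ g x₀ := by
    intro x₀ hx₀
    set cc : ℝ := min b ((3 * x₀ - a) / 2) with hcc
    have hccb : cc ≤ b := min_le_left _ _
    have hx₀cc : x₀ < cc := lt_min hx₀.2 (by linarith [hx₀.1])
    have hacc : a < cc := lt_trans hx₀.1 hx₀cc
    have hcc3 : (a + cc) / 2 < x₀ := by
      have h1 : cc ≤ (3 * x₀ - a) / 2 := min_le_right _ _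
      linarith
    obtain ⟨G₂, hG₂a, hG₂eq⟩ := myKey hacc (hg1.mono (Ioo_subset_Ioo le_rfl hccb))
      (fun n x hx => hsg n x ⟨hx.1, lt_of_lt_of_le hx.2 hccb⟩)
    have hmem : (x₀ : ℂ) ∈ Metric.ball (cc : ℂ) (cc - a) := by
      apply myMemBall
      rw [abs_of_neg (by linarith)]
      linarith
    have h1 : AnalyticAt ℝ (fun x : ℝ => (G₂ (x : ℂ)).re) x₀ := by
      apply AnalyticAt.comp (Complex.reCLM.analyticAt _)
      exact ((hG₂a _ hmem).restrictScalars).comp (Complex.ofRealCLM.analyticAt x₀)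
    apply h1.congr
    have hnb : Ioo ((a + cc) / 2) cc ∈ 𝓝 x₀ := isOpen_Ioo.mem_nhds ⟨hcc3, hx₀cc⟩
    filter_upwards [hnb] with y hy
    rw [hG₂eq y hy, Complex.ofReal_re]
  -- identity theorem
  have hDanal : AnalyticOnNhd ℝ (fun x : ℝ => G (x : ℂ) - ((g x : ℝ) : ℂ)) (Ioo a b) := by
    intro x hx
    have hmem : (x : ℂ) ∈ Metric.ball (b : ℂ) (b - a) := by
      apply myMemBall
      rw [abs_of_neg (by linarith [hx.2])]
      linarith [hx.1]
    have h1 : AnalyticAt ℝ (fun y : ℝ => G (y : ℂ)) x :=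
      ((hGa _ hmem).restrictScalars).comp (Complex.ofRealCLM.analyticAt x)
    have h2 : AnalyticAt ℝ (fun y : ℝ => ((g y : ℝ) : ℂ)) x :=
      (Complex.ofRealCLM.analyticAt _).comp (hganal x hx)
    exact h1.sub h2
  have hx₁ : (a + 3 * b) / 4 ∈ Ioo a b := ⟨by linarith, by linarith⟩
  have hDzero : EqOn (fun x : ℝ => G (x : ℂ) - ((g x : ℝ) : ℂ)) 0 (Ioo a b) := by
    apply hDanal.eqOn_zero_of_preconnected_of_eventuallyEq_zero isPreconnected_Ioo hx₁
    have hnb : Ioo ((a + b) / 2) b ∈ 𝓝 ((a + 3 * b) / 4) :=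
      isOpen_Ioo.mem_nhds ⟨by linarith, by linarith⟩
    filter_upwards [hnb] with y hy
    show G (y : ℂ) - ((g y : ℝ) : ℂ) = 0
    rw [hGeq y hy, sub_self]
  intro x hx
  have h3 := hDzero hx
  simpa [sub_eq_zero] using h3
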